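/- arXiv:2503.10449 — 2 statements merged into one kernel-verified Lean document; each statement's English description precedes it below -/
import Mathlib

section
/- Let f : Ω_C → (0,∞) be bounded away from 0. For (v,u) ∈ Ω_C × Ω_{C°}, equality f(v) f*(u) = 1/|⟨u,v⟩| holds if and only if ρ_{⟨f⟩}(v) = f(v) and u is an outer unit normal vector of ⟨f⟩ at the boundary point ρ_{⟨f⟩}(v)·v. -/
open Set Metric Pointwise

noncomputable section

abbrev E (n : ℕ) := EuclideanSpace ℝ (Fin n)

/-- A closed convex pointed cone with nonempty interior. -/
def IsGoodCone {n : ℕ} (C : Set (E n)) : Prop :=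
  IsClosed C ∧ Convex ℝ C ∧ (∀ x ∈ C, ∀ r : ℝ, 0 ≤ r → r • x ∈ C) ∧
    (∀ x ∈ C, -x ∈ C → x = 0) ∧ (interior C).Nonempty

/-- A `C`-pseudo-cone. -/
def IsPseudoCone {n : ℕ} (C K : Set (E n)) : Prop :=
  K.Nonempty ∧ IsClosed K ∧ Convex ℝ K ∧ K ⊆ C ∧ (0 : E n) ∉ K ∧ K + C = K

/-- The dual cone of `C`. -/
def dualCone {n : ℕ} (C : Set (E n)) : Set (E n) := {x | ∀ y ∈ C, (inner ℝ x y : ℝ) ≤ 0}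

/-- Ω_C = S^{n-1} ∩ int C. -/
def Omega {n : ℕ} (C : Set (E n)) : Set (E n) := {v | ‖v‖ = 1} ∩ interior C

/-- Radial function. -/
def radial {n : ℕ} (K : Set (E n)) (v : E n) : ℝ := sInf {r : ℝ | 0 < r ∧ r • v ∈ K}

/-- Support function. -/
def suppFn {n : ℕ} (K : Set (E n)) (u : E n) : ℝ := sSup ((fun y => (inner ℝ u y : ℝ)) '' K)

/-- Copolar set. -/
def copolar {n : ℕ} (K : Set (E n)) : Set (E n) := {x | ∀ y ∈ K, (inner ℝ x y : ℝ) ≤ -1}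

/-- Convexification of `f`. -/
def convexif {n : ℕ} (C : Set (E n)) (f : E n → ℝ) : Set (E n) :=
  ⋂₀ {K | IsPseudoCone C K ∧ ∀ v ∈ Omega C, f v • v ∈ K}

/-- Pseudo-conjugate of a function on a domain `D` of directions. -/
def pconj {n : ℕ} (D : Set (E n)) (f : E n → ℝ) (u : E n) : ℝ :=
  sSup ((fun v => 1 / (|(inner ℝ u v : ℝ)| * f v)) '' D)

/-- `u` is an outer normal vector of `K` at `x`. -/
def IsNormalAt {n : ℕ} (K : Set (E n)) (u x : E n) : Prop :=
  x ∈ K ∧ ∀ y ∈ K, (inner ℝ u (y - x) : ℝ) ≤ 0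

/-!
For `u ∈ int C°` the functional `⟪u, ·⟫` is negative on `Ω_C`, so `1 / (|⟪u, w⟫| f w)` equals
`-1 / ⟪u, f w • w⟫`, and `f v · f*(u) = 1 / |⟪u, v⟫|` says exactly that `f v • v` maximizes `⟪u, ·⟫`
among the generating points `f w • w`. In that case the part of `C` below the level
`⟪u, f v • v⟫` is a `C`-pseudo-cone containing every generating point, hence contains `⟨f⟩`;
so `u` is an outer normal of `⟨f⟩` at `f v • v`, and since `⟪u, v⟫ < 0` no smaller multiple of
`v` lies in `⟨f⟩`, i.e. `ρ_⟨f⟩(v) = f v`. Conversely, a normal at `f v • v ∈ ⟨f⟩` dominates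
every generating point.
-/

open scoped RealInnerProductSpace

theorem csSup_image_eq_iff_forall_le {α : Type*} {g : α → ℝ} {D : Set α} {v : α}
    (hbdd : BddAbove (g '' D)) (hv : v ∈ D) :
    sSup (g '' D) = g v ↔ ∀ w ∈ D, g w ≤ g v := by
  refine ⟨fun h w hw => h ▸ le_csSup hbdd ⟨w, hw, rfl⟩, fun h => ?_⟩
  exact IsGreatest.csSup_eq ⟨⟨v, hv, rfl⟩, by rintro _ ⟨w, hw, rfl⟩; exact h w hw⟩

theorem exists_inner_le_neg_mul_norm_of_mem_interior_dualCone {n : ℕ} {C : Set (E n)}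
    {u : E n} (hu : u ∈ interior (dualCone C)) :
    ∃ ε : ℝ, 0 < ε ∧ ∀ x ∈ C, ⟪u, x⟫ ≤ -(ε * ‖x‖) := by
  obtain ⟨ε, hε, hball⟩ := Metric.isOpen_iff.mp isOpen_interior u hu
  refine ⟨ε / 2, half_pos hε, fun x hx => ?_⟩
  rcases eq_or_ne x 0 with rfl | hx0
  · simp
  have hxn : 0 < ‖x‖ := norm_pos_iff.mpr hx0
  -- Test the dual-cone inequality at `x` with `u` pushed by `ε / 2` towards `x`.
  have hmem : u + (ε / 2 / ‖x‖) • x ∈ dualCone C := by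
    refine interior_subset (hball ?_)
    rw [mem_ball, dist_eq_norm, add_sub_cancel_left, norm_smul,
      Real.norm_of_nonneg (by positivity), div_mul_cancel₀ _ hxn.ne']
    exact half_lt_self hε
  have h := hmem x hx
  rw [inner_add_left, real_inner_smul_left, real_inner_self_eq_norm_mul_norm] at h
  have hscale : ε / 2 / ‖x‖ * (‖x‖ * ‖x‖) = ε / 2 * ‖x‖ := by field_simp
  linarith

section Cone

variable {n : ℕ} {C : Set (E n)}

theorem add_mem_of_convex_of_smul_mem (hcv : Convex ℝ C)
    (hcone : ∀ x ∈ C, ∀ r : ℝ, 0 ≤ r → r • x ∈ C) {y z : E n} (hy : y ∈ C) (hz : z ∈ C) :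
    y + z ∈ C := by
  have h := hcone _ (hcv hy hz (by norm_num : (0 : ℝ) ≤ 1 / 2) (by norm_num : (0 : ℝ) ≤ 1 / 2)
    (by norm_num)) 2 (by norm_num)
  rwa [smul_add, smul_smul, smul_smul, show (2 : ℝ) * (1 / 2) = 1 by norm_num, one_smul,
    one_smul] at h

theorem isPseudoCone_inter_halfSpace (hcl : IsClosed C) (hcv : Convex ℝ C)
    (hcone : ∀ x ∈ C, ∀ r : ℝ, 0 ≤ r → r • x ∈ C) {u : E n} (hu : u ∈ dualCone C) {c : ℝ}
    (hc : c < 0) (hne : (C ∩ {x | ⟪u, x⟫ ≤ c}).Nonempty) :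
    IsPseudoCone C (C ∩ {x | ⟪u, x⟫ ≤ c}) := by
  refine ⟨hne, ?_, ?_, inter_subset_left, ?_, ?_⟩
  · exact hcl.inter (isClosed_le (continuous_const.inner continuous_id) continuous_const)
  · exact hcv.inter (convex_halfSpace_le (innerₛₗ ℝ u).isLinear c)
  · rintro ⟨-, h0⟩
    simp only [mem_ofPred_eq, inner_zero_right] at h0
    linarith
  · obtain ⟨x₀, hx₀, -⟩ := hne
    have hzero : (0 : E n) ∈ C := by simpa using hcone x₀ hx₀ 0 le_rfl
    refine Subset.antisymm ?_ fun x hx => ⟨x, hx, 0, hzero, add_zero x⟩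
    rintro _ ⟨y, ⟨hyC, hyu⟩, z, hz, rfl⟩
    refine ⟨add_mem_of_convex_of_smul_mem hcv hcone hyC hz, ?_⟩
    simp only [mem_ofPred_eq, inner_add_right] at hyu ⊢
    linarith [hu z hz]

end Cone

section Convexification

variable {n : ℕ} {C : Set (E n)} {f : E n → ℝ}

theorem smul_mem_convexif {w : E n} (hw : w ∈ Omega C) : f w • w ∈ convexif C f :=
  mem_sInter.mpr fun _ hK => hK.2 w hw

theorem convexif_subset {K : Set (E n)} (hK : IsPseudoCone C K)
    (hfK : ∀ w ∈ Omega C, f w • w ∈ K) : convexif C f ⊆ K :=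
  sInter_subset_of_mem ⟨hK, hfK⟩

theorem isNormalAt_convexif_of_forall_inner_le (hcl : IsClosed C) (hcv : Convex ℝ C)
    (hcone : ∀ x ∈ C, ∀ r : ℝ, 0 ≤ r → r • x ∈ C) {u v : E n} (hu : u ∈ dualCone C)
    (hv : v ∈ Omega C) (hf : ∀ w ∈ Omega C, 0 < f w) (huv : ⟪u, f v • v⟫ < 0)
    (hmax : ∀ w ∈ Omega C, ⟪u, f w • w⟫ ≤ ⟪u, f v • v⟫) :
    IsNormalAt (convexif C f) u (f v • v) := by
  have hfC : ∀ w ∈ Omega C, f w • w ∈ C := fun w hw =>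
    hcone w (interior_subset hw.2) (f w) (hf w hw).le
  have hsub : convexif C f ⊆ C ∩ {x | ⟪u, x⟫ ≤ ⟪u, f v • v⟫} :=
    convexif_subset
      (isPseudoCone_inter_halfSpace hcl hcv hcone hu huv ⟨_, hfC v hv, le_refl ⟪u, f v • v⟫⟩)
      fun w hw => ⟨hfC w hw, hmax w hw⟩
  refine ⟨smul_mem_convexif hv, fun y hy => ?_⟩
  rw [inner_sub_right, sub_nonpos]
  exact (hsub hy).2

end Convexification

theorem radial_eq_of_isNormalAt {n : ℕ} {K : Set (E n)} {u v : E n} {t : ℝ} (ht : 0 < t)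
    (huv : ⟪u, v⟫ < 0) (hK : IsNormalAt K u (t • v)) : radial K v = t := by
  refine IsLeast.csInf_eq ⟨⟨ht, hK.1⟩, fun r ⟨_, hr⟩ => ?_⟩
  have h := hK.2 _ hr
  rw [← sub_smul, real_inner_smul_right] at h
  nlinarith

theorem bddAbove_image_one_div_abs_inner_mul {n : ℕ} {D : Set (E n)} {f : E n → ℝ} {u : E n}
    {ε a : ℝ} (hε : 0 < ε) (ha : 0 < a) (hu : ∀ w ∈ D, ε ≤ |⟪u, w⟫|) (hf : ∀ w ∈ D, a ≤ f w) :
    BddAbove ((fun w => 1 / (|⟪u, w⟫| * f w)) '' D) := by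
  refine ⟨1 / (ε * a), ?_⟩
  rintro _ ⟨w, hw, rfl⟩
  exact one_div_le_one_div_of_le (mul_pos hε ha)
    (mul_le_mul (hu w hw) (hf w hw) ha.le (hε.le.trans (hu w hw)))

theorem pconj_eq_iff_forall_inner_le {n : ℕ} {D : Set (E n)} {f : E n → ℝ} {u v : E n}
    (hv : v ∈ D) (hneg : ∀ w ∈ D, ⟪u, w⟫ < 0) (hf : ∀ w ∈ D, 0 < f w)
    (hbdd : BddAbove ((fun w => 1 / (|⟪u, w⟫| * f w)) '' D)) :
    f v * pconj D f u = 1 / |⟪u, v⟫| ↔ ∀ w ∈ D, ⟪u, f w • w⟫ ≤ ⟪u, f v • v⟫ := by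
  have hdenom : ∀ w ∈ D, |⟪u, w⟫| * f w = -⟪u, f w • w⟫ := fun w hw => by
    rw [abs_of_neg (hneg w hw), real_inner_smul_right]; ring
  have hdenom_pos : ∀ w ∈ D, 0 < -⟪u, f w • w⟫ := fun w hw =>
    hdenom w hw ▸ mul_pos (abs_pos.mpr (hneg w hw).ne) (hf w hw)
  have hscale : f v * pconj D f u = 1 / |⟪u, v⟫| ↔
      pconj D f u = 1 / (|⟪u, v⟫| * f v) := by
    rw [← div_div, eq_div_iff (hf v hv).ne', mul_comm]
  rw [hscale, pconj, csSup_image_eq_iff_forall_le hbdd hv]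
  refine forall₂_congr fun w hw => ?_
  rw [hdenom w hw, hdenom v hv, one_div_le_one_div (hdenom_pos w hw) (hdenom_pos v hv),
    neg_le_neg_iff]

theorem stmt16 {n : ℕ} (C : Set (E n)) (hC : IsGoodCone C) (f : E n → ℝ)
    (a : ℝ) (ha : 0 < a) (hf : ∀ v ∈ Omega C, a ≤ f v)
    (v u : E n) (hv : v ∈ Omega C) (hu : u ∈ Omega (dualCone C)) :
    f v * pconj (Omega C) f u = 1 / |(inner ℝ u v : ℝ)| ↔
      (radial (convexif C f) v = f v ∧
        IsNormalAt (convexif C f) u (radial (convexif C f) v • v)) := by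
  obtain ⟨hcl, hcv, hcone, -, -⟩ := hC
  obtain ⟨ε, hε, huC⟩ := exists_inner_le_neg_mul_norm_of_mem_interior_dualCone hu.2
  have hu_le : ∀ w ∈ Omega C, ⟪u, w⟫ ≤ -ε := fun w hw => by
    simpa [show ‖w‖ = 1 from hw.1] using huC w (interior_subset hw.2)
  have hu_neg : ∀ w ∈ Omega C, ⟪u, w⟫ < 0 := fun w hw =>
    (hu_le w hw).trans_lt (neg_neg_of_pos hε)
  have hfpos : ∀ w ∈ Omega C, 0 < f w := fun w hw => ha.trans_le (hf w hw)
  have hbdd := bddAbove_image_one_div_abs_inner_mul hε ha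
    (fun w hw => le_abs.mpr (Or.inr (le_neg.mp (hu_le w hw)))) hf
  rw [pconj_eq_iff_forall_inner_le hv hu_neg hfpos hbdd]
  constructor
  · intro hmax
    have huv : ⟪u, f v • v⟫ < 0 := by
      rw [real_inner_smul_right]; exact mul_neg_of_pos_of_neg (hfpos v hv) (hu_neg v hv)
    have hnormal := isNormalAt_convexif_of_forall_inner_le hcl hcv hcone
      (interior_subset hu.2) hv hfpos huv hmax
    have hrad := radial_eq_of_isNormalAt (hfpos v hv) (hu_neg v hv) hnormal
    exact ⟨hrad, hrad ▸ hnormal⟩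
  · rintro ⟨hrad, hnormal⟩ w hw
    rw [hrad] at hnormal
    simpa [inner_sub_right] using hnormal.2 _ (smul_mem_convexif hw)
end
end

section
/- Let K be a C-pseudo-cone, u ∈ Ω_{C°}, and v ∈ Ω_C. Then u is an outer normal vector of K at the point ρ_K(v)·v if and only if |⟨u,v⟩| ρ_{K*}(u) = −h_{K*}(v), i.e., v attains the infimum defining −h_{K*}(v) = inf_{u'∈Ω_{C°}}|⟨u',v⟩|ρ_{K*}(u') at u; equivalently v is a normal vector of K* at ρ_{K*}(u)·u. -/
/-!
Write `ρ = ρ_K(v)` and `h = h_K(u)`; the interior of the dual cone makes `h < 0`. Then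
`ρ_{K*}(u) = -1/h`, and separating the points `r v` (`0 < r < ρ`) from `K` shows
`h_{K*}(v) = -1/ρ`. Since `ρ v ∈ K` we always have `h ≥ ρ ⟪u, v⟫`, and each of the three
conditions in the theorem is equivalent to the reverse inequality.
-/

open Set Metric Pointwise

noncomputable section

open RealInnerProductSpace

section

variable {n : ℕ} {C K : Set (E n)} {u v : E n}

lemma isNormalAt_iff_of_isLUB {x : E n} {a : ℝ} (hx : x ∈ K)
    (ha : IsLUB ((fun y => ⟪u, y⟫) '' K) a) : IsNormalAt K u x ↔ a ≤ ⟪u, x⟫ := by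
  rw [isLUB_le_iff ha, mem_upperBounds, forall_mem_image, IsNormalAt]
  simp only [inner_sub_right, sub_nonpos, hx, true_and]

lemma radial_le {r : ℝ} (hr : 0 < r) (hrv : r • v ∈ K) : radial K v ≤ r :=
  csInf_le ⟨0, fun _ hs => hs.1.le⟩ ⟨hr, hrv⟩

lemma isLeast_radial (hKc : IsClosed K) (h0 : (0 : E n) ∉ K)
    (hex : ∃ r : ℝ, 0 < r ∧ r • v ∈ K) :
    IsLeast {r : ℝ | 0 < r ∧ r • v ∈ K} (radial K v) := by
  have hS : {r : ℝ | 0 < r ∧ r • v ∈ K} = (fun r : ℝ => r • v) ⁻¹' K ∩ Ici 0 := by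
    ext r
    refine ⟨fun hr => ⟨hr.2, hr.1.le⟩, fun ⟨hrv, hr⟩ => ⟨hr.lt_of_ne ?_, hrv⟩⟩
    rintro rfl
    exact h0 (by simpa using hrv)
  have hclosed : IsClosed {r : ℝ | 0 < r ∧ r • v ∈ K} :=
    hS ▸ (hKc.preimage (continuous_id.smul continuous_const)).inter isClosed_Ici
  obtain ⟨r, hr, hrv⟩ := hex
  exact ⟨hclosed.csInf_mem ⟨r, hr, hrv⟩ ⟨0, fun _ hs => hs.1.le⟩,
    fun _ hs => radial_le hs.1 hs.2⟩

lemma exists_pos_smul_sub_mem (hCsmul : ∀ x ∈ C, ∀ r : ℝ, 0 ≤ r → r • x ∈ C)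
    (hv : v ∈ interior C) (x : E n) : ∃ r : ℝ, 0 < r ∧ r • v - x ∈ C := by
  obtain ⟨δ, hδ, hball⟩ := Metric.isOpen_iff.mp isOpen_interior v hv
  set r := ‖x‖ / δ + 1
  have hr : 0 < r := by positivity
  have hmem : v - r⁻¹ • x ∈ C := by
    refine interior_subset (hball ?_)
    rw [mem_ball, dist_eq_norm, sub_sub_cancel_left, norm_neg, norm_smul, norm_inv,
      Real.norm_of_nonneg hr.le, inv_mul_lt_iff₀ hr]
    calc ‖x‖ < δ * (‖x‖ / δ) + δ := by rw [mul_div_cancel₀ _ hδ.ne']; linarith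
      _ = r * δ := by ring
  refine ⟨r, hr, ?_⟩
  simpa [smul_sub, smul_smul, hr.ne'] using hCsmul _ hmem r hr.le

lemma IsPseudoCone.isLeast_radial (hK : IsPseudoCone C K) (hC : IsGoodCone C)
    (hv : v ∈ interior C) : IsLeast {r : ℝ | 0 < r ∧ r • v ∈ K} (radial K v) := by
  obtain ⟨x, hx⟩ := hK.1
  obtain ⟨r, hr, hrC⟩ := exists_pos_smul_sub_mem hC.2.2.1 hv x
  refine _root_.isLeast_radial hK.2.1 hK.2.2.2.2.1 ⟨r, hr, ?_⟩
  rw [← hK.2.2.2.2.2, ← add_sub_cancel x (r • v)]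
  exact add_mem_add hx hrC

lemma exists_inner_le_neg_mul_norm (hu : u ∈ interior (dualCone C)) :
    ∃ c > 0, ∀ y ∈ C, ⟪u, y⟫ ≤ -(c * ‖y‖) := by
  obtain ⟨ε, hε, hball⟩ := Metric.isOpen_iff.mp isOpen_interior u hu
  refine ⟨ε / 2, by positivity, fun y hy => ?_⟩
  rcases eq_or_ne y 0 with rfl | hy0
  · simp
  have hny : 0 < ‖y‖ := norm_pos_iff.mpr hy0
  have hmem : u + (ε / 2 / ‖y‖) • y ∈ dualCone C := by
    refine interior_subset (hball ?_)
    rw [mem_ball, dist_eq_norm, add_sub_cancel_left, norm_smul,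
      Real.norm_of_nonneg (by positivity), div_mul_cancel₀ _ hny.ne']
    linarith
  have := hmem y hy
  rw [inner_add_left, real_inner_smul_left, real_inner_self_eq_norm_sq] at this
  have hsq : ε / 2 / ‖y‖ * ‖y‖ ^ 2 = ε / 2 * ‖y‖ := by field_simp
  linarith

lemma IsPseudoCone.exists_inner_le_neg (hK : IsPseudoCone C K) (hu : u ∈ interior (dualCone C)) :
    ∃ c > 0, ∀ y ∈ K, ⟪u, y⟫ ≤ -c := by
  obtain ⟨c, hc, hcC⟩ := exists_inner_le_neg_mul_norm hu
  have hε : 0 < Metric.infDist 0 K := (hK.2.1.notMem_iff_infDist_pos hK.1).mp hK.2.2.2.2.1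
  refine ⟨c * Metric.infDist 0 K, by positivity, fun y hy => ?_⟩
  have hdist : Metric.infDist 0 K ≤ ‖y‖ := by
    simpa using Metric.infDist_le_dist_of_mem (x := 0) hy
  nlinarith [hcC y (hK.2.2.2.1 hy)]

lemma inner_neg_of_mem_interior_dualCone (hu : u ∈ interior (dualCone C)) (hv : v ∈ C)
    (hv0 : v ≠ 0) : ⟪u, v⟫ < 0 := by
  obtain ⟨c, hc, hcC⟩ := exists_inner_le_neg_mul_norm hu
  linarith [hcC v hv, mul_pos hc (norm_pos_iff.2 hv0)]

lemma IsPseudoCone.bddAbove_inner (hK : IsPseudoCone C K) (hu : u ∈ interior (dualCone C)) :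
    BddAbove ((fun y => ⟪u, y⟫) '' K) :=
  let ⟨c, _, hcK⟩ := hK.exists_inner_le_neg hu
  ⟨-c, forall_mem_image.2 hcK⟩

lemma IsPseudoCone.suppFn_neg (hK : IsPseudoCone C K) (hu : u ∈ interior (dualCone C)) :
    suppFn K u < 0 := by
  obtain ⟨c, hc, hcK⟩ := hK.exists_inner_le_neg hu
  exact (csSup_le (hK.1.image _) (forall_mem_image.2 hcK)).trans_lt (neg_neg_iff_pos.2 hc)

lemma smul_mem_copolar_iff (hne : K.Nonempty) (hbdd : BddAbove ((fun y => ⟪u, y⟫) '' K))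
    {r : ℝ} (hr : 0 < r) : r • u ∈ copolar K ↔ r * suppFn K u ≤ -1 := by
  rw [mul_comm, ← le_div_iff₀ hr, suppFn, csSup_le_iff hbdd (hne.image _), forall_mem_image]
  exact forall₂_congr fun y _ => by rw [real_inner_smul_left, le_div_iff₀ hr, mul_comm]

lemma IsPseudoCone.isLeast_radial_copolar (hK : IsPseudoCone C K)
    (hu : u ∈ interior (dualCone C)) :
    IsLeast {r : ℝ | 0 < r ∧ r • u ∈ copolar K} (-suppFn K u)⁻¹ := by
  have hne := hK.1
  have hbdd := hK.bddAbove_inner hu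
  have hneg := hK.suppFn_neg hu
  have hpos : 0 < -suppFn K u := neg_pos.2 hneg
  refine ⟨⟨inv_pos.2 hpos, (smul_mem_copolar_iff hne hbdd (inv_pos.2 hpos)).2 ?_⟩, ?_⟩
  · rw [← neg_inv, neg_mul, inv_mul_cancel₀ hneg.ne]
  · rintro r ⟨hr, hmem⟩
    rw [smul_mem_copolar_iff hne hbdd hr] at hmem
    rw [inv_le_iff_one_le_mul₀ hpos]
    linarith

lemma inner_nonneg_of_lt_inner (hKC : K + C ⊆ K)
    (hCsmul : ∀ x ∈ C, ∀ r : ℝ, 0 ≤ r → r • x ∈ C) (hne : K.Nonempty) {w : E n} {s : ℝ}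
    (hw : ∀ a ∈ K, s < ⟪w, a⟫) {c : E n} (hc : c ∈ C) :
    0 ≤ ⟪w, c⟫ := by
  by_contra! hneg
  obtain ⟨a, ha⟩ := hne
  -- moving from `a` along `c` by this `t` reaches the separating hyperplane
  set t := (⟪w, a⟫ - s) / -⟪w, c⟫
  have ht : 0 ≤ t := div_nonneg (sub_nonneg.2 (hw a ha).le) (neg_nonneg.2 hneg.le)
  have := hw _ (hKC (add_mem_add ha (hCsmul c hc t ht)))
  rw [inner_add_right, real_inner_smul_right, div_mul_eq_mul_div, div_neg, mul_div_assoc,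
    div_self hneg.ne, mul_one] at this
  linarith

lemma exists_mem_copolar_inner_gt (hK : IsPseudoCone C K) (hC : IsGoodCone C) (hv : v ∈ C)
    {r : ℝ} (hr : 0 < r) (hrv : r • v ∉ K) : ∃ z ∈ copolar K, -r⁻¹ < ⟪v, z⟫ := by
  obtain ⟨f, s, hfv, hfK⟩ := geometric_hahn_banach_point_closed hK.2.2.1 hK.2.1 hrv
  set w := (InnerProductSpace.toDual ℝ (E n)).symm f
  have hw : ∀ x, ⟪w, x⟫ = f x := fun x => InnerProductSpace.toDual_symm_apply
  have hwK : ∀ a ∈ K, s < ⟪w, a⟫ := fun a ha => (hw a).symm ▸ hfK a ha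
  have hwv : 0 ≤ ⟪w, v⟫ :=
    inner_nonneg_of_lt_inner hK.2.2.2.2.2.subset hC.2.2.1 hK.1 hwK hv
  have hs : 0 < s := by
    have : r * ⟪w, v⟫ < s := by rwa [← real_inner_smul_right, hw]
    nlinarith
  refine ⟨-s⁻¹ • w, fun y hy => ?_, ?_⟩
  · rw [real_inner_smul_left, neg_mul, neg_le_neg_iff, ← div_eq_inv_mul, le_div_iff₀ hs,
      one_mul]
    exact (hwK y hy).le
  · rw [real_inner_smul_right, real_inner_comm, neg_mul, neg_lt_neg_iff, ← div_eq_inv_mul,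
      div_lt_iff₀ hs, ← div_eq_inv_mul, lt_div_iff₀ hr, mul_comm, ← real_inner_smul_right,
      hw]
    exact hfv

lemma IsPseudoCone.isLUB_inner_copolar (hK : IsPseudoCone C K) (hC : IsGoodCone C)
    (hv : v ∈ interior C) :
    IsLUB ((fun z => ⟪v, z⟫) '' copolar K) (-(radial K v)⁻¹) := by
  obtain ⟨⟨hρ, hρK⟩, hρmin⟩ := hK.isLeast_radial hC hv
  refine ⟨forall_mem_image.2 fun z hz => ?_, fun b hb => ?_⟩
  · have := hz _ hρK
    rw [real_inner_smul_right, real_inner_comm] at this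
    rw [← one_div, ← neg_div, le_div_iff₀ hρ]
    linarith
  · by_contra! hlt
    have hb0 : 0 < -b := by linarith [inv_pos.2 hρ]
    have hrρ : (-b)⁻¹ < radial K v := (inv_lt_comm₀ hb0 hρ).2 (by linarith)
    have hnot : (-b)⁻¹ • v ∉ K := fun h => (hρmin ⟨inv_pos.2 hb0, h⟩).not_gt hrρ
    obtain ⟨z, hz, hbz⟩ :=
      exists_mem_copolar_inner_gt hK hC (interior_subset hv) (inv_pos.2 hb0) hnot
    rw [inv_inv, neg_neg] at hbz
    exact (hb (mem_image_of_mem _ hz)).not_gt hbz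

end

theorem stmt18 {n : ℕ} (C K : Set (E n)) (hC : IsGoodCone C) (hK : IsPseudoCone C K)
    (u v : E n) (hu : u ∈ Omega (dualCone C)) (hv : v ∈ Omega C) :
    (IsNormalAt K u (radial K v • v) ↔
      |(inner ℝ u v : ℝ)| * radial (copolar K) u = -(suppFn (copolar K) v)) ∧
    (IsNormalAt K u (radial K v • v) ↔
      IsNormalAt (copolar K) v (radial (copolar K) u • u)) := by
  obtain ⟨⟨hρ, hρK⟩, -⟩ := hK.isLeast_radial hC hv.2
  have hLUB : IsLUB _ (suppFn K u) := isLUB_csSup (hK.1.image _) (hK.bddAbove_inner hu.2)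
  have hpos : 0 < -suppFn K u := neg_pos.2 (hK.suppFn_neg hu.2)
  have hρ'K := (hK.isLeast_radial_copolar hu.2).1.2
  have hρ' : radial (copolar K) u = _ := (hK.isLeast_radial_copolar hu.2).csInf_eq
  have hLUB' := hK.isLUB_inner_copolar hC hv.2
  have hsupp' : suppFn (copolar K) v = _ :=
    hLUB'.csSup_eq ⟨_, mem_image_of_mem _ hρ'K⟩
  have huv : ⟪u, v⟫ < 0 := inner_neg_of_mem_interior_dualCone hu.2 (interior_subset hv.2)
    (norm_ne_zero_iff.1 (hv.1 ▸ one_ne_zero))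
  have hgap : radial K v * ⟪u, v⟫ ≤ suppFn K u := by
    simpa only [real_inner_smul_right] using hLUB.1 (mem_image_of_mem _ hρK)
  rw [hρ', hsupp', isNormalAt_iff_of_isLUB hρK hLUB, isNormalAt_iff_of_isLUB hρ'K hLUB',
    abs_of_neg huv, real_inner_smul_right, real_inner_smul_right, real_inner_comm u v]
  have hgap' : (-suppFn K u)⁻¹ * ⟪u, v⟫ ≤ -(radial K v)⁻¹ := by
    rwa [inv_mul_eq_div, div_le_iff₀ hpos, neg_mul_neg, le_inv_mul_iff₀ hρ]
  have key :
      suppFn K u ≤ radial K v * ⟪u, v⟫ ↔ -(radial K v)⁻¹ ≤ (-suppFn K u)⁻¹ * ⟪u, v⟫ := by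
    rw [inv_mul_eq_div, le_div_iff₀ hpos, neg_mul_neg, inv_mul_le_iff₀ hρ]
  refine ⟨key.trans ⟨fun h => ?_, fun h => ?_⟩, key⟩
  · linarith [le_antisymm hgap' h]
  · linarith
end
end
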